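/- arXiv:0812.1873 — 2 statements merged into one kernel-verified Lean document; each statement's English description precedes it below -/
import Mathlib

section
/- Let N ≥ 1, and for each 0 ≤ i ≤ N let F_i(X) = A_i + m_i X + Σ_{j=1}^{d_i} min(X, B_{i,j}) with A_i ∈ ℝ, m_i ∈ ℕ, d_i ∈ ℕ, B_{i,j} ∈ ℝ. Define V(X,Y) = min over 0 ≤ i ≤ N of (F_i(X) + (N−i)Y), the tropical plane curve Trop C = {(X,Y) ∈ ℝ² : V is not differentiable at (X,Y)}, and 𝔇_i = {(X,Y) : V(X,Y) = F_i(X) + (N−i)Y}. Assume that for every X ∈ ℝ and every 1 ≤ i ≤ N the slice {Y : (X,Y) ∈ 𝔇_i} is nonempty; then for 1 ≤ i ≤ N this slice has a minimum, defining 𝒩_i(X), and we formally set 𝒩₀ ≡ −∞ and 𝒩_{N+1} ≡ +∞. Let G_i = {(X, 𝒩_i(X)) : X ∈ ℝ} for 1 ≤ i ≤ N, and for each 0 ≤ i ≤ N and 1 ≤ j ≤ d_i let L_{i,j} = {B_{i,j}} × [𝒩_i(B_{i,j}), 𝒩_{i+1}(B_{i,j})] (interpreted as a half-line or line when an endpoint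 is ±∞). Then Trop C = (∪_{i=1}^{N} G_i) ∪ (∪_{i,j} L_{i,j}). -/
/-!
For fixed `X`, `Y ↦ V (X, Y)` is the lower envelope of the lines `F i X + (N - i) * Y`, whose
slopes strictly decrease in `i`. Hence the set where line `i` is minimal is a closed interval,
these intervals are ordered like their indices, and the left endpoint `𝒩 i X` of the `i`-th one
is also attained by a line of smaller index.

Where two lines are minimal, `V` has two distinct supporting slopes in the `Y` direction; where
the minimal term `F i` has a breakpoint `B i j`, its left and right slopes give two in the `X`
direction. Either way `V` is not differentiable. Anywhere else a single term, smooth near `X`,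
agrees with `V` on a neighbourhood. A point of `L i j` lies between `𝒩 i` and `𝒩 (i + 1)`,
which forces line `i` to be minimal there.
-/

open Filter Topology Finset

theorem deriv_eq_of_le_add_mul_sub {f : ℝ → ℝ} {x a : ℝ} (hf : DifferentiableAt ℝ f x)
    (h : ∀ t, f t ≤ f x + a * (t - x)) : deriv f x = a := by
  have hmax : IsLocalMax (fun t => f t - a * t) x :=
    Eventually.of_forall fun t => by linarith [h t]
  have := hmax.hasDerivAt_eq_zero (hf.hasDerivAt.sub ((hasDerivAt_id x).const_mul a))
  linarith

theorem not_differentiableAt_of_le_add_mul_sub {f : ℝ → ℝ} {x a b : ℝ} (hab : a ≠ b)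
    (ha : ∀ t, f t ≤ f x + a * (t - x)) (hb : ∀ t, f t ≤ f x + b * (t - x)) :
    ¬ DifferentiableAt ℝ f x := fun hf =>
  hab ((deriv_eq_of_le_add_mul_sub hf ha).symm.trans (deriv_eq_of_le_add_mul_sub hf hb))

section SumMin

variable {ι : Type*} {s : Finset ι} {b : ι → ℝ} {x : ℝ}

theorem sum_min_le_add_card_filter_mul (P : ι → Prop) [DecidablePred P]
    (hP : ∀ j ∈ s, P j → x ≤ b j) (hnP : ∀ j ∈ s, ¬ P j → b j ≤ x) (t : ℝ) :
    ∑ j ∈ s, min t (b j) ≤ ∑ j ∈ s, min x (b j) + #{j ∈ s | P j} * (t - x) := by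
  rw [natCast_card_filter, sum_mul, ← sum_add_distrib]
  refine sum_le_sum fun j hj => ?_
  by_cases hPj : P j
  · simp [hPj, min_eq_left (hP j hj hPj)]
  · simp [hPj, min_eq_right (hnP j hj hPj)]

/-- At a breakpoint `x = b j`, the left slope `#{x ≤ b j}` and the right slope `#{x < b j}` of
the concave function `t ↦ ∑ j, min t (b j)` give two distinct supporting lines. -/
theorem not_differentiableAt_of_le_sum_min {f : ℝ → ℝ} {α μ : ℝ}
    (hle : ∀ t, f t ≤ α + μ * t + ∑ j ∈ s, min t (b j))
    (heq : f x = α + μ * x + ∑ j ∈ s, min x (b j)) (hx : ∃ j ∈ s, b j = x) :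
    ¬ DifferentiableAt ℝ f x := by
  have hcard : #{j ∈ s | x < b j} < #{j ∈ s | x ≤ b j} := by
    obtain ⟨j, hj, rfl⟩ := hx
    refine card_lt_card ((ssubset_iff_of_subset (monotone_filter_right s ?_)).2 ⟨j, ?_, ?_⟩)
    · exact fun _ _ => le_of_lt
    · simp [hj]
    · simp
  have support (P : ι → Prop) [DecidablePred P] (hP : ∀ j ∈ s, P j → x ≤ b j)
      (hnP : ∀ j ∈ s, ¬ P j → b j ≤ x) (t : ℝ) :
      f t ≤ f x + (μ + #{j ∈ s | P j}) * (t - x) := by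
    linarith [hle t, sum_min_le_add_card_filter_mul P hP hnP t]
  refine not_differentiableAt_of_le_add_mul_sub ?_
    (support (fun j => x < b j) (fun _ _ h => h.le) (fun _ _ h => not_lt.1 h))
    (support (fun j => x ≤ b j) (fun _ _ h => h) (fun _ _ h => (not_le.1 h).le))
  rw [Ne, add_right_inj]
  exact_mod_cast hcard.ne

theorem differentiableAt_sum_min (hx : ∀ j ∈ s, b j ≠ x) :
    DifferentiableAt ℝ (fun t => ∑ j ∈ s, min t (b j)) x := by
  refine DifferentiableAt.fun_sum fun j hj => ?_
  rcases (hx j hj).lt_or_gt with hbx | hxb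
  · exact (differentiableAt_const (b j)).congr_of_eventuallyEq
      ((eventually_gt_nhds hbx).mono fun t ht => min_eq_right ht.le)
  · exact differentiableAt_id.congr_of_eventuallyEq
      ((eventually_lt_nhds hxb).mono fun t ht => min_eq_left ht.le)

end SumMin

def IsLowerEnvelope (N : ℕ) (a c : ℕ → ℝ) (v : ℝ → ℝ) : Prop :=
  ∀ y, IsLeast {r | ∃ i ≤ N, r = a i + c i * y} (v y)

def attainSet (v : ℝ → ℝ) (a c : ℕ → ℝ) (i : ℕ) : Set ℝ :=
  {y | v y = a i + c i * y}

namespace IsLowerEnvelope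

variable {N : ℕ} {a c : ℕ → ℝ} {v : ℝ → ℝ}

theorem le (hv : IsLowerEnvelope N a c v) {i : ℕ} (hi : i ≤ N) (y : ℝ) : v y ≤ a i + c i * y :=
  (hv y).2 ⟨i, hi, rfl⟩

theorem exists_mem_attainSet (hv : IsLowerEnvelope N a c v) (y : ℝ) :
    ∃ i ≤ N, y ∈ attainSet v a c i :=
  (hv y).1

theorem isClosed_attainSet (hv : IsLowerEnvelope N a c v) {i : ℕ} (hi : i ≤ N) :
    IsClosed (attainSet v a c i) := by
  have : attainSet v a c i = ⋂ k ∈ Set.Iic N, {y | a i + c i * y ≤ a k + c k * y} := by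
    ext y
    simp only [attainSet, Set.mem_iInter, Set.mem_ofPred_eq, Set.mem_Iic]
    refine ⟨fun h k hk => h ▸ hv.le hk y, fun h => le_antisymm (hv.le hi y) ?_⟩
    obtain ⟨k, hk, hyk⟩ := hv.exists_mem_attainSet y
    exact (h k hk).trans_eq hyk.symm
  rw [this]
  exact isClosed_biInter fun k _ => isClosed_le (by fun_prop) (by fun_prop)

theorem le_of_mem_of_mem (hv : IsLowerEnvelope N a c v) (hc : StrictAnti c) {j k : ℕ}
    (hjk : j < k) (hk : k ≤ N) {y z : ℝ} (hy : y ∈ attainSet v a c j)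
    (hz : z ∈ attainSet v a c k) : y ≤ z := by
  by_contra! hzy
  have hj : a j + c j * y ≤ a k + c k * y := hy.symm.trans_le (hv.le hk y)
  have hk' : a k + c k * z ≤ a j + c j * z := hz.symm.trans_le (hv.le (hjk.le.trans hk) z)
  nlinarith [hc hjk]

theorem bddBelow_attainSet (hv : IsLowerEnvelope N a c v) (hc : StrictAnti c) {i : ℕ}
    (hi : 0 < i) : BddBelow (attainSet v a c i) := by
  refine ⟨(a i - a 0) / (c 0 - c i), fun y hy => ?_⟩
  have h0 : a i + c i * y ≤ a 0 + c 0 * y := hy.symm.trans_le (hv.le N.zero_le y)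
  rw [div_le_iff₀ (sub_pos.2 (hc hi))]
  linarith

theorem isLeast_sInf (hv : IsLowerEnvelope N a c v) (hc : StrictAnti c) {i : ℕ} (hi : 0 < i)
    (hiN : i ≤ N) (hne : (attainSet v a c i).Nonempty) :
    IsLeast (attainSet v a c i) (sInf (attainSet v a c i)) :=
  (hv.isClosed_attainSet hiN).isLeast_csInf hne (hv.bddBelow_attainSet hc hi)

theorem le_of_isLeast (hv : IsLowerEnvelope N a c v) (hc : StrictAnti c) {i k : ℕ} {n y : ℝ}
    (hn : IsLeast (attainSet v a c i) n) (hik : i ≤ k) (hk : k ≤ N)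
    (hy : y ∈ attainSet v a c k) : n ≤ y := by
  rcases hik.lt_or_eq with hik | rfl
  · exact hv.le_of_mem_of_mem hc hik hk hn.1 hy
  · exact hn.2 hy

/-- Just below its least point, line `i` is beaten by lines of smaller index only; as their
attainment sets are closed, one of them reaches the least point. -/
theorem exists_lt_mem_of_isLeast (hv : IsLowerEnvelope N a c v) (hc : StrictAnti c) {i : ℕ}
    (hi : i ≤ N) {n : ℝ} (hn : IsLeast (attainSet v a c i) n) :
    ∃ k < i, n ∈ attainSet v a c k := by
  have hbelow : Set.Iio n ⊆ ⋃ k ∈ Set.Iio i, attainSet v a c k := by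
    intro y hy
    obtain ⟨k, hk, hyk⟩ := hv.exists_mem_attainSet y
    have hki : k < i := lt_of_not_ge fun (hik : i ≤ k) =>
      (hv.le_of_isLeast hc hn hik hk hyk).not_gt hy
    exact Set.mem_biUnion hki hyk
  have hclosed : IsClosed (⋃ k ∈ Set.Iio i, attainSet v a c k) :=
    (Set.finite_Iio i).isClosed_biUnion fun k hk => hv.isClosed_attainSet (hk.le.trans hi)
  have hn' : n ∈ closure (Set.Iio n) := by rw [closure_Iio]; exact Set.mem_Iic.2 le_rfl
  simpa using hclosed.closure_subset_iff.2 hbelow hn'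

theorem exists_isLeast_of_mem_of_mem (hv : IsLowerEnvelope N a c v) (hc : StrictAnti c)
    {i k : ℕ} (hik : i ≠ k) (hi : i ≤ N) (hk : k ≤ N) {y : ℝ} (hyi : y ∈ attainSet v a c i)
    (hyk : y ∈ attainSet v a c k) : ∃ n ∈ Set.Icc 1 N, IsLeast (attainSet v a c n) y := by
  wlog hki : k < i generalizing i k
  · exact this hik.symm hk hi hyk hyi (lt_of_le_of_ne (not_lt.1 hki) hik)
  exact ⟨i, ⟨Nat.one_le_of_lt hki, hi⟩, hyi, fun z hz => hv.le_of_mem_of_mem hc hki hi hyk hz⟩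

theorem mem_attainSet_of_le_of_le (hv : IsLowerEnvelope N a c v) (hc : StrictAnti c)
    {n : ℕ → ℝ} (hn : ∀ i, 0 < i → i ≤ N → IsLeast (attainSet v a c i) (n i)) {i : ℕ}
    (hi : i ≤ N) {y : ℝ} (hlo : 0 < i → n i ≤ y) (hhi : i < N → y ≤ n (i + 1)) :
    y ∈ attainSet v a c i := by
  have of_lt {k : ℕ} (hki : k < i) (hyk : y ∈ attainSet v a c k) : y ∈ attainSet v a c i := by
    have hi0 : 0 < i := Nat.zero_lt_of_lt hki
    have hyn : y = n i :=
      le_antisymm (hv.le_of_mem_of_mem hc hki hi hyk (hn i hi0 hi).1) (hlo hi0)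
    exact hyn ▸ (hn i hi0 hi).1
  obtain ⟨k, hk, hyk⟩ := hv.exists_mem_attainSet y
  rcases lt_trichotomy k i with hki | rfl | hik
  · exact of_lt hki hyk
  · exact hyk
  · have hiN : i < N := hik.trans_le hk
    have hn' := hn (i + 1) i.succ_pos hiN
    have hyn : y = n (i + 1) := le_antisymm (hhi hiN) (hv.le_of_isLeast hc hn' hik hk hyk)
    obtain ⟨k', hk', hk'y⟩ := hv.exists_lt_mem_of_isLeast hc hiN hn'
    rw [← hyn] at hk'y
    rcases (Nat.lt_succ_iff.1 hk').lt_or_eq with hk'i | rfl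
    · exact of_lt hk'i hk'y
    · exact hk'y

theorem not_differentiableAt_of_mem_of_mem (hv : IsLowerEnvelope N a c v) {i k : ℕ}
    (hi : i ≤ N) (hk : k ≤ N) (hc : c i ≠ c k) {y : ℝ} (hyi : y ∈ attainSet v a c i)
    (hyk : y ∈ attainSet v a c k) : ¬ DifferentiableAt ℝ v y := by
  have hyi : v y = a i + c i * y := hyi
  have hyk : v y = a k + c k * y := hyk
  exact not_differentiableAt_of_le_add_mul_sub hc (fun t => by linarith [hv.le hi t])
    (fun t => by linarith [hv.le hk t])

end IsLowerEnvelope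

section TropicalCurve

variable {N : ℕ} {F : ℕ → ℝ → ℝ} {c : ℕ → ℝ} {V : ℝ × ℝ → ℝ}

theorem not_differentiableAt_of_two_active
    (hV : ∀ X, IsLowerEnvelope N (fun i => F i X) c fun Y => V (X, Y)) {i k : ℕ} (hi : i ≤ N)
    (hk : k ≤ N) (hc : c i ≠ c k) {X Y : ℝ} (hYi : V (X, Y) = F i X + c i * Y)
    (hYk : V (X, Y) = F k X + c k * Y) : ¬ DifferentiableAt ℝ V (X, Y) := fun hd =>
  (hV X).not_differentiableAt_of_mem_of_mem hi hk hc hYi hYk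
    (hd.comp Y ((differentiableAt_const X).prodMk differentiableAt_id))

theorem not_differentiableAt_of_active_of_kink
    (hV : ∀ X, IsLowerEnvelope N (fun i => F i X) c fun Y => V (X, Y)) {i : ℕ} (hi : i ≤ N)
    {ι : Type*} {s : Finset ι} {b : ι → ℝ} {α μ : ℝ}
    (hF : ∀ t, F i t = α + μ * t + ∑ j ∈ s, min t (b j)) {X Y : ℝ}
    (hYi : V (X, Y) = F i X + c i * Y) (hX : ∃ j ∈ s, b j = X) :
    ¬ DifferentiableAt ℝ V (X, Y) := fun hd =>
  not_differentiableAt_of_le_sum_min (f := fun t => V (t, Y)) (α := α + c i * Y) (μ := μ)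
    (fun t => by linarith [(hV t).le hi Y, hF t]) (by linarith [hF X]) hX
    (hd.comp X (differentiableAt_id.prodMk (differentiableAt_const Y)))

theorem differentiableAt_of_unique_active
    (hV : ∀ X, IsLowerEnvelope N (fun i => F i X) c fun Y => V (X, Y))
    (hcont : ∀ l ≤ N, Continuous (F l)) {k : ℕ} (hk : k ≤ N) {X Y : ℝ}
    (hdiff : DifferentiableAt ℝ (F k) X) (hYk : V (X, Y) = F k X + c k * Y)
    (huniq : ∀ l ≤ N, l ≠ k → V (X, Y) ≠ F l X + c l * Y) : DifferentiableAt ℝ V (X, Y) := by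
  have hnear : ∀ᶠ q : ℝ × ℝ in 𝓝 (X, Y),
      ∀ l ∈ Set.Iic N, l ≠ k → F k q.1 + c k * q.2 < F l q.1 + c l * q.2 := by
    refine (Set.finite_Iic N).eventually_all.2 fun l hl => ?_
    by_cases hlk : l = k
    · exact Eventually.of_forall fun _ h => absurd hlk h
    have hlt : F k X + c k * Y < F l X + c l * Y :=
      hYk ▸ ((hV X).le hl Y).lt_of_ne (huniq l hl hlk)
    have hg : ∀ l ≤ N, Continuous fun q : ℝ × ℝ => F l q.1 + c l * q.2 := fun l hl =>
      ((hcont l hl).comp continuous_fst).add (continuous_const.mul continuous_snd)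
    exact ((hg k hk).continuousAt.eventually_lt (hg l hl).continuousAt hlt).mono
      fun _ h _ => h
  have heq : V =ᶠ[𝓝 (X, Y)] fun q => F k q.1 + c k * q.2 := by
    filter_upwards [hnear] with ⟨X', Y'⟩ hq
    obtain ⟨l, hl, hlq⟩ := (hV X').exists_mem_attainSet Y'
    replace hlq : V (X', Y') = F l X' + c l * Y' := hlq
    rcases eq_or_ne l k with rfl | hlk
    · exact hlq
    · exact absurd ((hV X').le hk Y') (not_le.2 (hlq ▸ hq l hl hlk))
  rw [heq.differentiableAt_iff]
  exact (hdiff.comp _ differentiableAt_fst).add (differentiableAt_snd.const_mul _)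

theorem exists_active_tie_or_kink_of_not_differentiableAt
    (hV : ∀ X, IsLowerEnvelope N (fun i => F i X) c fun Y => V (X, Y))
    {A μ : ℕ → ℝ} {d : ℕ → ℕ} {B : ℕ → ℕ → ℝ}
    (hF : ∀ i ≤ N, ∀ t, F i t = A i + μ i * t + ∑ j ∈ range (d i), min t (B i j)) {X Y : ℝ}
    (hnd : ¬ DifferentiableAt ℝ V (X, Y)) :
    ∃ k ≤ N, V (X, Y) = F k X + c k * Y ∧
      ((∃ l ≤ N, l ≠ k ∧ V (X, Y) = F l X + c l * Y) ∨ ∃ j < d k, B k j = X) := by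
  obtain ⟨k, hk, hYk⟩ := (hV X).exists_mem_attainSet Y
  refine ⟨k, hk, hYk, ?_⟩
  by_contra! ⟨htie, hkink⟩
  have hFeq : ∀ i ≤ N, F i = fun t => A i + μ i * t + ∑ j ∈ range (d i), min t (B i j) :=
    fun i hi => funext (hF i hi)
  refine hnd (differentiableAt_of_unique_active hV (fun l hl => ?_) hk ?_ hYk htie)
  · rw [hFeq l hl]
    fun_prop
  · rw [hFeq k hk]
    exact ((differentiableAt_const _).add (differentiableAt_id.const_mul _)).add
      (differentiableAt_sum_min fun j hj => hkink j (mem_range.1 hj))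

end TropicalCurve

theorem tropical_curve_decomposition_general (N : ℕ)
    (A : ℕ → ℝ) (m : ℕ → ℕ) (d : ℕ → ℕ) (B : ℕ → ℕ → ℝ)
    (F : ℕ → ℝ → ℝ)
    (hF : ∀ i ≤ N, ∀ X : ℝ,
      F i X = A i + (m i : ℝ) * X + ∑ j ∈ Finset.range (d i), min X (B i j))
    (V : ℝ × ℝ → ℝ)
    (hV : ∀ p : ℝ × ℝ,
      IsLeast {r : ℝ | ∃ i ≤ N, r = F i p.1 + ((N : ℝ) - (i : ℕ)) * p.2} (V p))
    (hne : ∀ X : ℝ, ∀ i, 1 ≤ i → i ≤ N →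
      ({Y : ℝ | V (X, Y) = F i X + ((N : ℝ) - (i : ℕ)) * Y}).Nonempty) :
    ∃ 𝒩 : ℕ → ℝ → ℝ,
      (∀ X : ℝ, ∀ i, 1 ≤ i → i ≤ N →
        IsLeast {Y : ℝ | V (X, Y) = F i X + ((N : ℝ) - (i : ℕ)) * Y} (𝒩 i X)) ∧
      {p : ℝ × ℝ | ¬ DifferentiableAt ℝ V p} =
        (⋃ i ∈ Set.Icc 1 N, {p : ℝ × ℝ | p.2 = 𝒩 i p.1}) ∪
        (⋃ i ∈ Set.Iic N, ⋃ j ∈ Set.Iio (d i),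
          {p : ℝ × ℝ | p.1 = B i j ∧ (1 ≤ i → 𝒩 i (B i j) ≤ p.2) ∧
            (i < N → p.2 ≤ 𝒩 (i + 1) (B i j))}) := by
  set c : ℕ → ℝ := fun i => (N : ℝ) - i
  have hc : StrictAnti c := fun i j hij => by simpa [c] using hij
  have henv : ∀ X, IsLowerEnvelope N (fun i => F i X) c fun Y => V (X, Y) := fun X Y => hV (X, Y)
  set 𝒩 : ℕ → ℝ → ℝ := fun i X => sInf (attainSet (fun Y => V (X, Y)) (fun i => F i X) c i)
  have hleast : ∀ X i, 0 < i → i ≤ N →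
      IsLeast (attainSet (fun Y => V (X, Y)) (fun i => F i X) c i) (𝒩 i X) :=
    fun X i hi hiN => (henv X).isLeast_sInf hc hi hiN (hne X i hi hiN)
  refine ⟨𝒩, hleast, Set.Subset.antisymm ?_ (Set.union_subset ?_ ?_)⟩
  · rintro ⟨X, Y⟩ hnd
    obtain ⟨k, hk, hYk, ⟨l, hl, hlk, hYl⟩ | ⟨j, hj, rfl⟩⟩ :=
      exists_active_tie_or_kink_of_not_differentiableAt henv hF hnd
    · obtain ⟨i, hi, hiY⟩ := (henv X).exists_isLeast_of_mem_of_mem hc hlk hl hk hYl hYk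
      exact Set.mem_union_left _ (Set.mem_biUnion hi (hiY.unique (hleast X i hi.1 hi.2)))
    · refine Set.mem_union_right _ (Set.mem_biUnion hk (Set.mem_biUnion hj ⟨rfl, ?_, ?_⟩))
      · exact fun hk0 => (hleast _ k hk0 hk).2 hYk
      · exact fun hkN => (henv _).le_of_mem_of_mem hc k.lt_succ_self hkN hYk
          (hleast _ (k + 1) k.succ_pos hkN).1
  · refine Set.iUnion₂_subset fun i hi => ?_
    rintro ⟨X, Y⟩ (hY : Y = 𝒩 i X)
    obtain ⟨k, hki, hYk⟩ := (henv X).exists_lt_mem_of_isLeast hc hi.2 (hleast X i hi.1 hi.2)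
    exact hY ▸ not_differentiableAt_of_two_active henv hi.2 (hki.le.trans hi.2) (hc hki).ne
      (hleast X i hi.1 hi.2).1 hYk
  · refine Set.iUnion₂_subset fun i hi => Set.iUnion₂_subset fun j hj => ?_
    rintro ⟨X, Y⟩ ⟨rfl, hlo, hhi⟩
    have hYi : V (B i j, Y) = F i (B i j) + c i * Y :=
      (henv _).mem_attainSet_of_le_of_le hc (hleast _) hi hlo hhi
    exact not_differentiableAt_of_active_of_kink henv hi (hF i hi) hYi ⟨j, mem_range.2 hj, rfl⟩

/-- Proposition 3.3 of the paper.  Let `F_i(X) = A_i + m_i X + Σ_j min(X, B_{i,j})`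
for `0 ≤ i ≤ N`, let `V(X,Y) = min_i (F_i(X) + (N-i)Y)` and let the tropical plane
curve `Trop C` be the non-differentiability locus of `V`.  If every slice
`{Y : (X,Y) ∈ 𝔇_i}` (for `1 ≤ i ≤ N`) is nonempty, then each such slice has a
minimum `𝒩_i(X)`, and `Trop C` equals the union of the graphs
`G_i = {Y = 𝒩_i(X)}` (`1 ≤ i ≤ N`) with the vertical segments
`L_{i,j} = {B_{i,j}} × [𝒩_i(B_{i,j}), 𝒩_{i+1}(B_{i,j})]` (`0 ≤ i ≤ N`,
`1 ≤ j ≤ d_i`), where formally `𝒩₀ ≡ -∞` and `𝒩_{N+1} ≡ +∞` (so that the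
corresponding endpoint constraint is vacuous). -/
theorem tropical_curve_decomposition (N : ℕ) (hN : 1 ≤ N)
    (A : ℕ → ℝ) (m : ℕ → ℕ) (d : ℕ → ℕ) (B : ℕ → ℕ → ℝ)
    (F : ℕ → ℝ → ℝ)
    (hF : ∀ i ≤ N, ∀ X : ℝ,
      F i X = A i + (m i : ℝ) * X + ∑ j ∈ Finset.range (d i), min X (B i j))
    (V : ℝ × ℝ → ℝ)
    (hV : ∀ p : ℝ × ℝ,
      IsLeast {r : ℝ | ∃ i ≤ N, r = F i p.1 + ((N : ℝ) - (i : ℕ)) * p.2} (V p))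
    (hne : ∀ X : ℝ, ∀ i, 1 ≤ i → i ≤ N →
      ({Y : ℝ | V (X, Y) = F i X + ((N : ℝ) - (i : ℕ)) * Y}).Nonempty) :
    ∃ 𝒩 : ℕ → ℝ → ℝ,
      (∀ X : ℝ, ∀ i, 1 ≤ i → i ≤ N →
        IsLeast {Y : ℝ | V (X, Y) = F i X + ((N : ℝ) - (i : ℕ)) * Y} (𝒩 i X)) ∧
      {p : ℝ × ℝ | ¬ DifferentiableAt ℝ V p} =
        (⋃ i ∈ Set.Icc 1 N, {p : ℝ × ℝ | p.2 = 𝒩 i p.1}) ∪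
        (⋃ i ∈ Set.Iic N, ⋃ j ∈ Set.Iio (d i),
          {p : ℝ × ℝ | p.1 = B i j ∧ (1 ≤ i → 𝒩 i (B i j) ≤ p.2) ∧
            (i < N → p.2 ≤ 𝒩 (i + 1) (B i j))}) :=
  tropical_curve_decomposition_general N A m d B F hF V hV hne
end

section
/- For every r > 1 and every μ > 0 there exists μ₀ > 0 such that for all ε ∈ (0,1) and all α, β ∈ D(r), if the Euclidean distance in ℂⁿ between α and β is less than μ₀, then dist_(ε)(la(ε)(α), la(ε)(β)) < μ. -/
/-! On `D(r)` every coordinate has modulus above `1/r`, where `log` is `r`-Lipschitz and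
`z ↦ z/|z|` is `2r`-Lipschitz. The factor `ε` in `l(ε)` cancels the `ε⁻¹` in `dist_(ε)`, so
`dist_(ε)(la(ε)(α), la(ε)(β)) ≤ 3r · |α - β|` uniformly in `ε`, and `μ₀ = μ / (3r)` works. -/

/-- `l(ε)(x) = (-ε log|x₁|, …, -ε log|xₙ|)`. -/
noncomputable def lmap {n : ℕ} (ε : ℝ) (x : Fin n → ℂ) : Fin n → ℝ :=
  fun i => -ε * Real.log ‖x i‖

/-- `a(x) = (x₁/|x₁|, …, xₙ/|xₙ|)`. -/
noncomputable def amap {n : ℕ} (x : Fin n → ℂ) : Fin n → ℂ :=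
  fun i => x i / (‖x i‖ : ℂ)

/-- Euclidean distance on `ℝⁿ`. -/
noncomputable def dEuc {n : ℕ} (x y : Fin n → ℝ) : ℝ :=
  Real.sqrt (∑ i, (x i - y i) ^ 2)

/-- Distance on `Uⁿ` induced from `ℂⁿ`. -/
noncomputable def dU {n : ℕ} (u v : Fin n → ℂ) : ℝ :=
  Real.sqrt (∑ i, ‖u i - v i‖ ^ 2)

/-- `dist_(ε)((x,u),(y,v)) = ε⁻¹ d_{ℝⁿ}(x,y) + d_{Uⁿ}(u,v)`. -/
noncomputable def distEps {n : ℕ} (ε : ℝ)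
    (p q : (Fin n → ℝ) × (Fin n → ℂ)) : ℝ :=
  ε⁻¹ * dEuc p.1 q.1 + dU p.2 q.2

open NormedSpace in
theorem norm_normalize_le_one {V : Type*} [NormedAddCommGroup V] [NormedSpace ℝ V] (x : V) :
    ‖normalize x‖ ≤ 1 := by
  rcases eq_or_ne x 0 with rfl | hx
  · simp [normalize_zero_eq_zero]
  · exact (norm_normalize_eq_one_iff.2 hx).le

open NormedSpace in
theorem norm_mul_norm_normalize_sub_normalize_le {V : Type*} [NormedAddCommGroup V]
    [NormedSpace ℝ V] (x y : V) :
    ‖x‖ * ‖normalize x - normalize y‖ ≤ 2 * ‖x - y‖ := by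
  have hscaled : ‖x‖ • (normalize x - normalize y) = (x - y) + (‖y‖ - ‖x‖) • normalize y := by
    rw [smul_sub, norm_smul_normalize, sub_smul, norm_smul_normalize]
    abel
  calc ‖x‖ * ‖normalize x - normalize y‖
      = ‖(x - y) + (‖y‖ - ‖x‖) • normalize y‖ := by
        rw [← hscaled, norm_smul, norm_norm]
    _ ≤ ‖x - y‖ + |‖y‖ - ‖x‖| * ‖normalize y‖ := by
        grw [norm_add_le, norm_smul, Real.norm_eq_abs]
    _ ≤ ‖x - y‖ + ‖x - y‖ * 1 := by
        gcongr
        · rw [abs_sub_comm]; exact abs_norm_sub_norm_le x y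
        · exact norm_normalize_le_one y
    _ = 2 * ‖x - y‖ := by ring

theorem Complex.div_norm_eq_normalize (z : ℂ) : z / (‖z‖ : ℂ) = NormedSpace.normalize z := by
  rw [NormedSpace.normalize, Complex.real_smul, div_eq_inv_mul, Complex.ofReal_inv]

theorem Real.abs_log_sub_log_le {m a b : ℝ} (hm : 0 < m) (ha : m ≤ a) (hb : m ≤ b) :
    |log a - log b| ≤ |a - b| / m := by
  wlog hba : b ≤ a generalizing a b
  · rw [abs_sub_comm, abs_sub_comm a b]
    exact this hb ha (le_of_not_ge hba)
  have hb0 : 0 < b := hm.trans_le hb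
  have ha0 : 0 < a := hb0.trans_le hba
  rw [abs_of_nonneg (sub_nonneg.2 (log_le_log hb0 hba)), abs_of_nonneg (sub_nonneg.2 hba)]
  calc log a - log b = log (a / b) := (log_div ha0.ne' hb0.ne').symm
    _ ≤ a / b - 1 := log_le_sub_one_of_pos (div_pos ha0 hb0)
    _ = (a - b) / b := by field_simp
    _ ≤ (a - b) / m := div_le_div_of_nonneg_left (sub_nonneg.2 hba) hm hb

theorem sqrt_sum_sq_le_mul_sqrt_sum_sq {ι : Type*} [Fintype ι] {f g : ι → ℝ} {c : ℝ}
    (hc : 0 ≤ c) (h : ∀ i, |f i| ≤ c * |g i|) :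
    √(∑ i, f i ^ 2) ≤ c * √(∑ i, g i ^ 2) := by
  rw [← Real.sqrt_sq hc, ← Real.sqrt_mul (sq_nonneg c), Finset.mul_sum]
  gcongr with i
  calc f i ^ 2 = |f i| ^ 2 := (sq_abs _).symm
    _ ≤ (c * |g i|) ^ 2 := by gcongr; exact h i
    _ = c ^ 2 * g i ^ 2 := by rw [mul_pow, sq_abs]

section BoundedBelow

variable {n : ℕ} {m : ℝ} {α β : Fin n → ℂ}

theorem dEuc_lmap_le {ε : ℝ} (hε : 0 ≤ ε) (hm : 0 < m) (hα : ∀ i, m ≤ ‖α i‖)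
    (hβ : ∀ i, m ≤ ‖β i‖) :
    dEuc (lmap ε α) (lmap ε β) ≤ ε / m * √(∑ i, ‖α i - β i‖ ^ 2) := by
  refine sqrt_sum_sq_le_mul_sqrt_sum_sq (by positivity) fun i => ?_
  calc |lmap ε α i - lmap ε β i| = ε * |Real.log ‖α i‖ - Real.log ‖β i‖| := by
        rw [lmap, lmap, ← mul_sub, abs_mul, abs_neg, abs_of_nonneg hε]
    _ ≤ ε * (|‖α i‖ - ‖β i‖| / m) := by gcongr; exact Real.abs_log_sub_log_le hm (hα i) (hβ i)
    _ ≤ ε * (‖α i - β i‖ / m) := by gcongr; exact abs_norm_sub_norm_le _ _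
    _ = ε / m * |‖α i - β i‖| := by rw [abs_norm]; ring

theorem dU_amap_le (hm : 0 < m) (hα : ∀ i, m ≤ ‖α i‖) :
    dU (amap α) (amap β) ≤ 2 / m * √(∑ i, ‖α i - β i‖ ^ 2) := by
  refine sqrt_sum_sq_le_mul_sqrt_sum_sq (by positivity) fun i => ?_
  rw [abs_norm, abs_norm, amap, amap, Complex.div_norm_eq_normalize,
    Complex.div_norm_eq_normalize, div_mul_eq_mul_div, le_div_iff₀ hm]
  calc ‖_‖ * m ≤ ‖α i‖ * ‖_‖ := by rw [mul_comm]; gcongr; exact hα i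
    _ ≤ 2 * ‖α i - β i‖ := norm_mul_norm_normalize_sub_normalize_le _ _

theorem distEps_la_le {ε : ℝ} (hε : 0 < ε) (hm : 0 < m) (hα : ∀ i, m ≤ ‖α i‖)
    (hβ : ∀ i, m ≤ ‖β i‖) :
    distEps ε (lmap ε α, amap α) (lmap ε β, amap β) ≤ 3 / m * √(∑ i, ‖α i - β i‖ ^ 2) := by
  calc distEps ε (lmap ε α, amap α) (lmap ε β, amap β)
      ≤ ε⁻¹ * (ε / m * √(∑ i, ‖α i - β i‖ ^ 2)) + 2 / m * √(∑ i, ‖α i - β i‖ ^ 2) := by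
        unfold distEps
        gcongr
        exacts [dEuc_lmap_le hε.le hm hα hβ, dU_amap_le hm hα]
    _ = 3 / m * √(∑ i, ‖α i - β i‖ ^ 2) := by field_simp; ring

end BoundedBelow

/-- The key metric estimate in the approximation theorem at the origin: for
every `r > 1` and `μ > 0` there is `μ₀ > 0` such that for all `ε ∈ (0,1)` and
all `α, β ∈ D(r) = {x : 1/r < |xᵢ| < r}`, if the Euclidean distance in `ℂⁿ`
between `α` and `β` is less than `μ₀`, then
`dist_(ε)(la(ε)(α), la(ε)(β)) < μ`. -/
theorem metric_estimate_for_approximation (n : ℕ) (r : ℝ) (hr : 1 < r)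
    (μ : ℝ) (hμ : 0 < μ) :
    ∃ μ₀ > (0 : ℝ), ∀ ε ∈ Set.Ioo (0 : ℝ) 1, ∀ α β : Fin n → ℂ,
      (∀ i, 1 / r < ‖α i‖ ∧ ‖α i‖ < r) →
      (∀ i, 1 / r < ‖β i‖ ∧ ‖β i‖ < r) →
      Real.sqrt (∑ i, ‖α i - β i‖ ^ 2) < μ₀ →
      distEps ε (lmap ε α, amap α) (lmap ε β, amap β) < μ := by
  have hr0 : 0 < r := one_pos.trans hr
  refine ⟨μ / (3 * r), by positivity, fun ε hε α β hα hβ hd => ?_⟩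
  calc distEps ε (lmap ε α, amap α) (lmap ε β, amap β)
      ≤ 3 / (1 / r) * √(∑ i, ‖α i - β i‖ ^ 2) :=
        distEps_la_le hε.1 (by positivity) (fun i => (hα i).1.le) (fun i => (hβ i).1.le)
    _ < 3 / (1 / r) * (μ / (3 * r)) := by gcongr
    _ = μ := by field_simp
end
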